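/- Let X be a graph with a finite homological isoperimetric function, and suppose H²_{(∞)}(X; ℓ∞(ℕ,ℝ)) = 0. Then for every sufficiently large natural number R there is a constant K ≥ 0 such that every bounded linear functional g: B_1^R(X) → ℝ (bounded with respect to the filling norm ‖·‖_F^R) extends to a linear functional G: C_1^R(X) → ℝ bounded with respect to the ℓ¹-norm, with operator norm ≤ K times the filling-norm of g. -/

import Mathlib

open Finsupp

variable {V : Type*}

/-- 0-chains. -/
abbrev C0 (V : Type*) := V →₀ ℝ
/-- 1-chains: free real vector space on ordered pairs of vertices. -/
abbrev C1 (V : Type*) := (V × V) →₀ ℝ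
/-- 2-chains: free real vector space on ordered triples of vertices. -/
abbrev C2 (V : Type*) := (V × V × V) →₀ ℝ
/-- 3-chains. -/
abbrev C3 (V : Type*) := (V × V × V × V) →₀ ℝ

/-- ℓ¹-norm of a finitely supported chain. -/
noncomputable def l1 {α : Type*} (c : α →₀ ℝ) : ℝ := c.support.sum fun t => |c t|

/-- Boundary map ∂ : C₂ → C₁, (x₀,x₁,x₂) ↦ (x₁,x₂) − (x₀,x₂) + (x₀,x₁). -/
noncomputable def bdry2 : C2 V →ₗ[ℝ] C1 V :=
  Finsupp.lsum ℝ fun t => LinearMap.toSpanSingleton ℝ (C1 V)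
    (single (t.2.1, t.2.2) 1 - single (t.1, t.2.2) 1 + single (t.1, t.2.1) 1)

/-- Boundary map ∂ : C₁ → C₀, (x₀,x₁) ↦ x₁ − x₀. -/
noncomputable def bdry1 : C1 V →ₗ[ℝ] C0 V :=
  Finsupp.lsum ℝ fun t => LinearMap.toSpanSingleton ℝ (C0 V)
    (single t.2 1 - single t.1 1)

/-- Boundary map ∂ : C₃ → C₂. -/
noncomputable def bdry3 : C3 V →ₗ[ℝ] C2 V :=
  Finsupp.lsum ℝ fun t => LinearMap.toSpanSingleton ℝ (C2 V)
    (single (t.2.1, t.2.2.1, t.2.2.2) 1 - single (t.1, t.2.2.1, t.2.2.2) 1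
      + single (t.1, t.2.1, t.2.2.2) 1 - single (t.1, t.2.1, t.2.2.1) 1)

/-- Two vertices are at (finite) distance at most R. -/
def pairOK (G : SimpleGraph V) (R : ℕ) (a b : V) : Prop :=
  G.Reachable a b ∧ G.dist a b ≤ R

/-- Membership in C₁^R : supported on pairs at distance ≤ R. -/
def memC1R (G : SimpleGraph V) (R : ℕ) (c : C1 V) : Prop :=
  ∀ t ∈ c.support, pairOK G R t.1 t.2

/-- Membership in C₂^R : supported on triples of diameter ≤ R. -/
def memC2R (G : SimpleGraph V) (R : ℕ) (c : C2 V) : Prop :=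
  ∀ t ∈ c.support, pairOK G R t.1 t.2.1 ∧ pairOK G R t.1 t.2.2 ∧ pairOK G R t.2.1 t.2.2

/-- Membership in B₁^R = ∂C₂^R. -/
def memB1R (G : SimpleGraph V) (R : ℕ) (b : C1 V) : Prop :=
  ∃ a : C2 V, memC2R G R a ∧ bdry2 a = b

/-- The filling norm ‖b‖_F^R = inf of ℓ¹-norms of fillings in C₂^R. -/
noncomputable def fillNorm (G : SimpleGraph V) (R : ℕ) (b : C1 V) : ℝ :=
  sInf {r | ∃ a : C2 V, memC2R G R a ∧ bdry2 a = b ∧ r = l1 a}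

/-- The 1-chain c(p) associated to a walk p. -/
noncomputable def walkChain (G : SimpleGraph V) {x y : V} (p : G.Walk x y) : C1 V :=
  (p.darts.map fun d => single d.toProd (1 : ℝ)).sum

/-- A walk is geodesic if its length realizes the distance of its endpoints. -/
def IsGeodesicWalk (G : SimpleGraph V) {x y : V} (p : G.Walk x y) : Prop :=
  p.length = G.dist x y

/-- Geodesic triangles of G are n-slim. -/
def SlimTriangles (G : SimpleGraph V) (n : ℕ) : Prop :=
  ∀ (x y z : V) (p : G.Walk x y) (q : G.Walk y z) (r : G.Walk x z),
    IsGeodesicWalk G p → IsGeodesicWalk G q → IsGeodesicWalk G r →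
    (∀ v ∈ p.support, ∃ w, (w ∈ q.support ∨ w ∈ r.support) ∧ G.dist v w ≤ n) ∧
    (∀ v ∈ q.support, ∃ w, (w ∈ p.support ∨ w ∈ r.support) ∧ G.dist v w ≤ n) ∧
    (∀ v ∈ r.support, ∃ w, (w ∈ p.support ∨ w ∈ q.support) ∧ G.dist v w ≤ n)

/-- A real chain has integer coefficients. -/
def IntCoeffs {α : Type*} (c : α →₀ ℝ) : Prop := ∀ t, ∃ n : ℤ, c t = n

/-- X has a finite homological isoperimetric function with parameters R₀, θ :
for every closed path p, c(p) ∈ B₁^{R₀} and ‖c(p)‖_F^{R₀} ≤ θ(length p). -/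
def FinHomIsop (G : SimpleGraph V) (R₀ : ℕ) (θ : ℕ → ℝ) : Prop :=
  ∀ (x : V) (p : G.Walk x x), memB1R G R₀ (walkChain G p) ∧
    fillNorm G R₀ (walkChain G p) ≤ θ p.length

/-- A 2-cochain is bounded on each C₂^R. -/
def Bdd2 {W : Type*} [NormedAddCommGroup W] [NormedSpace ℝ W]
    (G : SimpleGraph V) (f : C2 V →ₗ[ℝ] W) : Prop :=
  ∀ R : ℕ, ∃ M : ℝ, ∀ c : C2 V, memC2R G R c → ‖f c‖ ≤ M * l1 c

/-- A 1-cochain is bounded on each C₁^R. -/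
def Bdd1 {W : Type*} [NormedAddCommGroup W] [NormedSpace ℝ W]
    (G : SimpleGraph V) (f : C1 V →ₗ[ℝ] W) : Prop :=
  ∀ R : ℕ, ∃ M : ℝ, ∀ c : C1 V, memC1R G R c → ‖f c‖ ≤ M * l1 c

/-- A Banach space is 1-injective: bounded linear maps into it extend from
subspaces of normed spaces with the same norm. -/
def IsOneInjective (W : Type*) [NormedAddCommGroup W] [NormedSpace ℝ W] : Prop :=
  ∀ (E : Type) [NormedAddCommGroup E] [NormedSpace ℝ E],
    ∀ (p : Subspace ℝ E) (φ : p →L[ℝ] W),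
      ∃ ψ : E →L[ℝ] W, (∀ x : p, ψ x = φ x) ∧ ‖ψ‖ ≤ ‖φ‖

attribute [local instance] Classical.decEq

/-- C₁^R as a submodule of C₁. -/
noncomputable def C1Rsub (G : SimpleGraph V) (R : ℕ) : Submodule ℝ (C1 V) where
  carrier := {c | memC1R G R c}
  zero_mem' := fun t ht => absurd ht (by simp)
  add_mem' := by
    intro a b ha hb t ht
    rcases Finset.mem_union.1 (Finsupp.support_add ht) with h | h
    · exact ha t h
    · exact hb t h
  smul_mem' := by
    intro r a ha t ht
    exact ha t (Finsupp.support_smul ht)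

/-- B₁^R = ∂C₂^R as a submodule of C₁. -/
noncomputable def B1Rsub (G : SimpleGraph V) (R : ℕ) : Submodule ℝ (C1 V) where
  carrier := {b | memB1R G R b}
  zero_mem' := ⟨0, fun t ht => absurd ht (by simp), map_zero _⟩
  add_mem' := by
    rintro b₁ b₂ ⟨a₁, ha₁, rfl⟩ ⟨a₂, ha₂, rfl⟩
    refine ⟨a₁ + a₂, ?_, map_add _ _ _⟩
    intro t ht
    rcases Finset.mem_union.1 (Finsupp.support_add ht) with h | h
    · exact ha₁ t h
    · exact ha₂ t h
  smul_mem' := by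
    rintro r b ⟨a, ha, rfl⟩
    exact ⟨r • a, fun t ht => ha t (Finsupp.support_smul ht), map_smul _ _ _⟩

/-!
Straighten a 1-chain by replacing each pair `(x, y)` with a chosen geodesic from `x` to `y`.
The difference `c - straighten c` is the boundary of a cone over these geodesics, of ℓ¹-norm at
most `(R + 1) ‖c‖₁`; and `straighten (∂ a)` is, triangle by triangle, a difference of two closed
paths of length `≤ 3R'`, so its filling norm is at most a constant (from `θ`) times `‖a‖₁`.

If the filling norm on `B₁^R` were not bounded by `K ‖·‖₁`, pick `bₙ` with `‖bₙ‖_F > n ‖bₙ‖₁`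
and, by Hahn–Banach, functionals `hₙ` dominated by `‖·‖_F` with `hₙ bₙ = ‖bₙ‖_F`. The cochain
`a ↦ (hₙ (straighten (∂ a)))ₙ` is a bounded `ℓ∞`-valued 2-cocycle, hence `g ∘ ∂` with `g`
bounded on `C₁^R`; on `b = ∂ a` this gives `hₙ b ≤ (‖g‖ + R + 1) ‖b‖₁` for all `n`, a
contradiction. Given `‖·‖_F ≤ K ‖·‖₁` on `B₁^R`, the extension is Hahn–Banach for the seminorm
`K Mg ‖·‖₁` on `C₁^R`.
-/

section RealFinsupp

variable {α : Type*}

lemma l1_eq_sum {c : α →₀ ℝ} {s : Finset α} (h : c.support ⊆ s) :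
    l1 c = ∑ t ∈ s, |c t| :=
  Finset.sum_subset h fun t _ ht => by rw [notMem_support_iff.1 ht, abs_zero]

lemma l1_add (a b : α →₀ ℝ) : l1 (a + b) ≤ l1 a + l1 b := by
  rw [l1_eq_sum (s := a.support ∪ b.support) support_add,
    l1_eq_sum (s := a.support ∪ b.support) Finset.subset_union_left,
    l1_eq_sum (s := a.support ∪ b.support) Finset.subset_union_right, ← Finset.sum_add_distrib]
  exact Finset.sum_le_sum fun t _ => abs_add_le (a t) (b t)

lemma l1_smul (r : ℝ) (c : α →₀ ℝ) : l1 (r • c) = |r| * l1 c := by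
  rw [l1_eq_sum support_smul, l1, Finset.mul_sum]
  simp [abs_mul]

lemma l1_single (t : α) (r : ℝ) : l1 (single t r) = |r| := by
  rw [l1_eq_sum support_single_subset, Finset.sum_singleton, single_eq_same]

noncomputable def l1Seminorm : Seminorm ℝ (α →₀ ℝ) :=
  Seminorm.of l1 l1_add fun r c => by rw [l1_smul, Real.norm_eq_abs]

@[simp] lemma l1Seminorm_apply (c : α →₀ ℝ) : l1Seminorm c = l1 c := rfl

lemma l1_nonneg (c : α →₀ ℝ) : 0 ≤ l1 c := apply_nonneg l1Seminorm c

lemma Seminorm.le_mul_l1 {M : Type*} [AddCommGroup M] [Module ℝ M] (p : Seminorm ℝ M)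
    (φ : (α →₀ ℝ) →ₗ[ℝ] M) {C : ℝ} {c : α →₀ ℝ}
    (h : ∀ t ∈ c.support, p (φ (single t 1)) ≤ C) : p (φ c) ≤ C * l1 c := by
  conv_lhs => rw [← c.sum_single]
  rw [Finsupp.sum, map_sum, l1, Finset.mul_sum]
  refine (Finset.le_sum_of_subadditive p (map_zero p).le (map_add_le_add p) _ _).trans ?_
  refine Finset.sum_le_sum fun t ht => ?_
  rw [← smul_single_one, map_smul, map_smul_eq_mul, Real.norm_eq_abs, mul_comm C]
  exact mul_le_mul_of_nonneg_left (h t ht) (abs_nonneg _)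

lemma Finsupp.map_mem_of_forall_single {M : Type*} [AddCommGroup M] [Module ℝ M] {s : Set α}
    (φ : (α →₀ ℝ) →ₗ[ℝ] M) {N : Submodule ℝ M} (h : ∀ t ∈ s, φ (single t 1) ∈ N)
    {a : α →₀ ℝ} (ha : a ∈ supported ℝ ℝ s) : φ a ∈ N := by
  have hmap : (supported ℝ ℝ s).map φ ≤ N := by
    rw [supported_eq_span_single, Submodule.map_span_le]
    rintro _ ⟨t, ht, rfl⟩
    exact h t ht
  exact hmap (Submodule.mem_map_of_mem ha)

end RealFinsupp

section Chains

variable {G : SimpleGraph V} {R R' : ℕ}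

def pairsWithin (G : SimpleGraph V) (R : ℕ) : Set (V × V) := {t | pairOK G R t.1 t.2}

def trianglesWithin (G : SimpleGraph V) (R : ℕ) : Set (V × V × V) :=
  {t | pairOK G R t.1 t.2.1 ∧ pairOK G R t.1 t.2.2 ∧ pairOK G R t.2.1 t.2.2}

lemma memC1R_iff {c : C1 V} : memC1R G R c ↔ c ∈ supported ℝ ℝ (pairsWithin G R) := Iff.rfl

lemma memC2R_iff {a : C2 V} : memC2R G R a ↔ a ∈ supported ℝ ℝ (trianglesWithin G R) := Iff.rfl

lemma pairOK_mono (h : R ≤ R') {x y : V} (hxy : pairOK G R x y) : pairOK G R' x y :=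
  ⟨hxy.1, hxy.2.trans h⟩

lemma pairOK_self (x : V) : pairOK G R x x := ⟨SimpleGraph.Reachable.refl x, by simp⟩

lemma pairOK_of_adj (hR : 1 ≤ R) {x y : V} (h : G.Adj x y) : pairOK G R x y :=
  ⟨h.reachable, (SimpleGraph.dist_le h.toWalk).trans (by simpa using hR)⟩

lemma memC2R_mono (h : R ≤ R') {a : C2 V} (ha : memC2R G R a) : memC2R G R' a :=
  supported_mono (M := ℝ) (R := ℝ) (s := trianglesWithin G R) (t := trianglesWithin G R')
    (fun _ ht => ⟨pairOK_mono h ht.1, pairOK_mono h ht.2.1, pairOK_mono h ht.2.2⟩) ha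

lemma memC2R_single {x y z : V} (hxy : pairOK G R x y) (hxz : pairOK G R x z)
    (hyz : pairOK G R y z) (r : ℝ) : memC2R G R (single (x, y, z) r) :=
  single_mem_supported ℝ (s := trianglesWithin G R) r ⟨hxy, hxz, hyz⟩

lemma bdry2_single (t : V × V × V) :
    bdry2 (single t 1) =
      single (t.2.1, t.2.2) (1 : ℝ) - single (t.1, t.2.2) 1 + single (t.1, t.2.1) 1 := by
  simp [bdry2]

lemma bdry2_bdry3 (a : C3 V) : bdry2 (bdry3 a) = 0 := by
  suffices h : (bdry2 : C2 V →ₗ[ℝ] C1 V) ∘ₗ bdry3 = 0 from LinearMap.congr_fun h a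
  ext t : 2
  simp only [LinearMap.comp_apply, LinearMap.zero_apply, lsingle_apply, bdry3, lsum_single,
    LinearMap.toSpanSingleton_apply, one_smul, map_add, map_sub, bdry2_single]
  abel

lemma B1Rsub_le_C1Rsub : B1Rsub G R ≤ C1Rsub G R := by
  rintro _ ⟨a, ha, rfl⟩
  refine map_mem_of_forall_single bdry2 (fun t ht => ?_) (memC2R_iff.1 ha)
  rw [bdry2_single]
  exact add_mem (sub_mem (single_mem_supported ℝ 1 ht.2.2) (single_mem_supported ℝ 1 ht.2.1))
    (single_mem_supported ℝ 1 ht.1)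

end Chains

section FillingNorm

variable {G : SimpleGraph V} {R R' : ℕ} {b : C1 V}

lemma fillNorm_nonneg (b : C1 V) : 0 ≤ fillNorm G R b :=
  Real.sInf_nonneg (by rintro r ⟨a, -, -, rfl⟩; exact l1_nonneg a)

lemma fillNorm_le {a : C2 V} (ha : memC2R G R a) (hab : bdry2 a = b) : fillNorm G R b ≤ l1 a :=
  csInf_le ⟨0, by rintro r ⟨a, -, -, rfl⟩; exact l1_nonneg a⟩ ⟨a, ha, hab, rfl⟩

lemma exists_filling_lt (hb : memB1R G R b) {ε : ℝ} (hε : 0 < ε) :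
    ∃ a : C2 V, memC2R G R a ∧ bdry2 a = b ∧ l1 a < fillNorm G R b + ε := by
  obtain ⟨a, ha, hab⟩ := hb
  obtain ⟨r, ⟨a, ha, hab, rfl⟩, hlt⟩ := Real.lt_sInf_add_pos
    (s := {r | ∃ a : C2 V, memC2R G R a ∧ bdry2 a = b ∧ r = l1 a}) ⟨l1 a, a, ha, hab, rfl⟩ hε
  exact ⟨a, ha, hab, hlt⟩

lemma fillNorm_mono (h : R ≤ R') (hb : memB1R G R b) : fillNorm G R' b ≤ fillNorm G R b :=
  le_of_forall_pos_le_add fun ε hε => by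
    obtain ⟨a, ha, hab, hlt⟩ := exists_filling_lt hb hε
    exact (fillNorm_le (memC2R_mono h ha) hab).trans hlt.le

lemma fillNorm_add_le {b' : C1 V} (hb : memB1R G R b) (hb' : memB1R G R b') :
    fillNorm G R (b + b') ≤ fillNorm G R b + fillNorm G R b' :=
  le_of_forall_pos_le_add fun ε hε => by
    obtain ⟨a, ha, hab, hlt⟩ := exists_filling_lt hb (half_pos hε)
    obtain ⟨a', ha', hab', hlt'⟩ := exists_filling_lt hb' (half_pos hε)
    have hsum := fillNorm_le (memC2R_iff.2 (add_mem (memC2R_iff.1 ha) (memC2R_iff.1 ha')))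
      (by rw [map_add, hab, hab'])
    linarith [l1_add a a']

lemma fillNorm_smul_le (r : ℝ) (hb : memB1R G R b) :
    fillNorm G R (r • b) ≤ |r| * fillNorm G R b :=
  le_of_forall_pos_le_add fun ε hε => by
    obtain ⟨a, ha, hab, hlt⟩ := exists_filling_lt hb (show 0 < ε / (|r| + 1) by positivity)
    have hra := fillNorm_le (memC2R_iff.2 (Submodule.smul_mem _ r (memC2R_iff.1 ha)))
      (by rw [map_smul, hab])
    have hε' : |r| * (ε / (|r| + 1)) ≤ ε := by
      rw [mul_div_assoc']
      exact div_le_of_le_mul₀ (by positivity) hε.le (by nlinarith [abs_nonneg r])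
    rw [l1_smul] at hra
    nlinarith [abs_nonneg r]

lemma fillNorm_zero : fillNorm G R (0 : C1 V) = 0 :=
  le_antisymm ((fillNorm_le (zero_mem (supported ℝ ℝ _)) (map_zero bdry2)).trans_eq
    (by simp [l1])) (fillNorm_nonneg 0)

noncomputable def fillSeminorm (G : SimpleGraph V) (R : ℕ) : Seminorm ℝ (B1Rsub G R) :=
  Seminorm.ofSMulLE (fun z => fillNorm G R z) fillNorm_zero
    (fun z w => fillNorm_add_le z.2 w.2) (fun r z => fillNorm_smul_le r z.2)

lemma fillSeminorm_apply (z : B1Rsub G R) : fillSeminorm G R z = fillNorm G R z := rfl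

end FillingNorm

section Straightening

variable {G : SimpleGraph V} {R : ℕ}

noncomputable def geod (hconn : G.Connected) (x y : V) : G.Walk x y :=
  (hconn.exists_walk_length_eq_dist x y).choose

lemma geod_length (hconn : G.Connected) (x y : V) : (geod hconn x y).length = G.dist x y :=
  (hconn.exists_walk_length_eq_dist x y).choose_spec

lemma walkChain_cons {x u y : V} (h : G.Adj x u) (p : G.Walk u y) :
    walkChain G (.cons h p) = single (x, u) 1 + walkChain G p := by
  simp [walkChain]

lemma walkChain_append {x y z : V} (p : G.Walk x y) (q : G.Walk y z) :
    walkChain G (p.append q) = walkChain G p + walkChain G q := by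
  simp [walkChain]

lemma pairOK_of_mem_support {x y u : V} (p : G.Walk x y) (hu : u ∈ p.support)
    (hlen : p.length ≤ R) : pairOK G R x u :=
  ⟨⟨p.takeUntil u hu⟩,
    (SimpleGraph.dist_le _).trans ((p.length_takeUntil_le_length hu).trans hlen)⟩

noncomputable def coneChain (o : V) : {x y : V} → G.Walk x y → C2 V
  | _, _, .nil => 0
  | _, _, .cons (u := x) (v := y) _ p => single (o, x, y) 1 + coneChain o p

lemma bdry2_coneChain (o : V) {x y : V} (p : G.Walk x y) :
    bdry2 (coneChain o p) = walkChain G p + single (o, x) 1 - single (o, y) 1 := by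
  induction p with
  | nil => simp [coneChain, walkChain]
  | cons h p ih =>
    rw [coneChain, map_add, ih, bdry2_single, walkChain_cons]
    abel

lemma l1_coneChain (o : V) {x y : V} (p : G.Walk x y) : l1 (coneChain o p) ≤ p.length := by
  induction p with
  | nil => simp [coneChain, l1]
  | @cons x y _ h p ih =>
    rw [coneChain, SimpleGraph.Walk.length_cons, Nat.cast_succ]
    linarith [l1_add (single (o, x, y) (1 : ℝ)) (coneChain o p), l1_single (o, x, y) (1 : ℝ),
      abs_one (α := ℝ)]

lemma memC2R_coneChain (hR : 1 ≤ R) (o : V) {x y : V} (p : G.Walk x y)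
    (hp : ∀ u ∈ p.support, pairOK G R o u) : memC2R G R (coneChain o p) := by
  induction p with
  | nil => exact zero_mem (supported ℝ ℝ (trianglesWithin G R))
  | @cons x y _ h p ih =>
    have hrest : memC2R G R (coneChain o p) := ih fun u hu => hp u (by simp [hu])
    exact add_mem (memC2R_single (hp x (by simp)) (hp y (by simp)) (pairOK_of_adj hR h) 1)
      (memC2R_iff.1 hrest)

noncomputable def straighten (hconn : G.Connected) : C1 V →ₗ[ℝ] C1 V :=
  linearCombination ℝ fun t => walkChain G (geod hconn t.1 t.2)

/-- The degenerate triangle `(x,x,x)` cancels the degenerate edge `(x,x)` in the boundary of the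
cone from `x` over the geodesic from `x` to `y`. -/
noncomputable def coneFilling (hconn : G.Connected) : C1 V →ₗ[ℝ] C2 V :=
  linearCombination ℝ fun t => single (t.1, t.1, t.1) 1 - coneChain t.1 (geod hconn t.1 t.2)

lemma bdry2_coneFilling (hconn : G.Connected) (c : C1 V) :
    bdry2 (coneFilling hconn c) = c - straighten hconn c := by
  suffices h : bdry2 ∘ₗ coneFilling hconn = LinearMap.id - straighten hconn from
    LinearMap.congr_fun h c
  ext t : 2
  simp only [LinearMap.comp_apply, LinearMap.sub_apply, LinearMap.id_apply, lsingle_apply,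
    coneFilling, straighten, linearCombination_single, one_smul, map_sub, bdry2_single,
    bdry2_coneChain]
  abel

lemma memC2R_coneFilling (hconn : G.Connected) (hR : 1 ≤ R) {c : C1 V} (hc : memC1R G R c) :
    memC2R G R (coneFilling hconn c) := by
  refine memC2R_iff.2 (map_mem_of_forall_single _ (fun t ht => ?_) (memC1R_iff.1 hc))
  rw [coneFilling, linearCombination_single, one_smul]
  refine sub_mem (memC2R_single (pairOK_self _) (pairOK_self _) (pairOK_self _) 1)
    (memC2R_coneChain hR _ _ fun u hu => pairOK_of_mem_support _ hu ?_)
  rw [geod_length]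
  exact ht.2

lemma l1_coneFilling_le (hconn : G.Connected) {c : C1 V} (hc : memC1R G R c) :
    l1 (coneFilling hconn c) ≤ (R + 1) * l1 c := by
  refine l1Seminorm.le_mul_l1 (coneFilling hconn) fun t ht => ?_
  rw [coneFilling, linearCombination_single, one_smul]
  have hlen : ((geod hconn t.1 t.2).length : ℝ) ≤ R := by
    rw [geod_length]
    exact_mod_cast (hc t ht).2
  calc l1Seminorm (single (t.1, t.1, t.1) (1 : ℝ) - coneChain t.1 (geod hconn t.1 t.2))
      ≤ l1 (single (t.1, t.1, t.1) (1 : ℝ)) + l1 (coneChain t.1 (geod hconn t.1 t.2)) :=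
        map_sub_le_add _ _ _
    _ ≤ R + 1 := by rw [l1_single, abs_one]; linarith [l1_coneChain t.1 (geod hconn t.1 t.2)]

lemma fillNorm_sub_straighten_le (hconn : G.Connected) (hR : 1 ≤ R) {c : C1 V}
    (hc : memC1R G R c) : fillNorm G R (c - straighten hconn c) ≤ (R + 1) * l1 c :=
  (fillNorm_le (memC2R_coneFilling hconn hR hc) (bdry2_coneFilling hconn c)).trans
    (l1_coneFilling_le hconn hc)

end Straightening

section Isoperimetry

variable {G : SimpleGraph V} {R R₀ : ℕ} {θ : ℕ → ℝ}

noncomputable def triangleLoop (hconn : G.Connected) (x y z : V) : G.Walk x x :=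
  (geod hconn x y).append ((geod hconn y z).append (geod hconn z x))

noncomputable def digonLoop (hconn : G.Connected) (x z : V) : G.Walk x x :=
  (geod hconn x z).append (geod hconn z x)

lemma straighten_bdry2_single (hconn : G.Connected) (x y z : V) :
    straighten hconn (bdry2 (single (x, y, z) 1)) =
      walkChain G (triangleLoop hconn x y z) - walkChain G (digonLoop hconn x z) := by
  simp only [bdry2_single, map_add, map_sub, straighten, linearCombination_single, one_smul,
    triangleLoop, digonLoop, walkChain_append]
  abel

lemma walkChain_mem_B1Rsub (hfhif : FinHomIsop G R₀ θ) (hR₀ : R₀ ≤ R) {x : V}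
    (p : G.Walk x x) : walkChain G p ∈ B1Rsub G R := by
  obtain ⟨a, ha, hab⟩ := (hfhif x p).1
  exact ⟨a, memC2R_mono hR₀ ha, hab⟩

lemma fillNorm_walkChain_le (hfhif : FinHomIsop G R₀ θ) (hR₀ : R₀ ≤ R) {x : V}
    (p : G.Walk x x) : fillNorm G R (walkChain G p) ≤ θ p.length :=
  (fillNorm_mono hR₀ (hfhif x p).1).trans (hfhif x p).2

lemma straighten_bdry2_mem (hconn : G.Connected) (hfhif : FinHomIsop G R₀ θ) (hR₀ : R₀ ≤ R)
    (a : C2 V) : straighten hconn (bdry2 a) ∈ B1Rsub G R := by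
  refine map_mem_of_forall_single (straighten hconn ∘ₗ bdry2) (s := Set.univ) (fun t _ => ?_)
    (by simp)
  rw [LinearMap.comp_apply, straighten_bdry2_single]
  exact sub_mem (walkChain_mem_B1Rsub hfhif hR₀ _) (walkChain_mem_B1Rsub hfhif hR₀ _)

noncomputable def straightenedBoundary (hconn : G.Connected) (hfhif : FinHomIsop G R₀ θ)
    (hR₀ : R₀ ≤ R) : C2 V →ₗ[ℝ] B1Rsub G R :=
  LinearMap.codRestrict _ (straighten hconn ∘ₗ bdry2) (straighten_bdry2_mem hconn hfhif hR₀)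

lemma straightenedBoundary_bdry3 (hconn : G.Connected) (hfhif : FinHomIsop G R₀ θ)
    (hR₀ : R₀ ≤ R) (a : C3 V) : straightenedBoundary hconn hfhif hR₀ (bdry3 a) = 0 := by
  ext1
  simp [straightenedBoundary, bdry2_bdry3]

lemma fillSeminorm_straightenedBoundary_single_le (hconn : G.Connected)
    (hfhif : FinHomIsop G R₀ θ) (hR₀ : R₀ ≤ R) {R' : ℕ} {C : ℝ} (hC : ∀ m ≤ 3 * R', θ m ≤ C)
    {t : V × V × V} (ht : t ∈ trianglesWithin G R') :
    fillSeminorm G R (straightenedBoundary hconn hfhif hR₀ (single t 1)) ≤ 2 * C := by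
  obtain ⟨x, y, z⟩ := t
  obtain ⟨⟨-, hxy⟩, ⟨-, hxz⟩, ⟨-, hyz⟩⟩ :
    pairOK G R' x y ∧ pairOK G R' x z ∧ pairOK G R' y z := ht
  have hzx : G.dist z x = G.dist x z := SimpleGraph.dist_comm
  have hsplit : straightenedBoundary hconn hfhif hR₀ (single (x, y, z) 1) =
      ⟨_, walkChain_mem_B1Rsub hfhif hR₀ (triangleLoop hconn x y z)⟩ -
        ⟨_, walkChain_mem_B1Rsub hfhif hR₀ (digonLoop hconn x z)⟩ :=
    Subtype.ext (straighten_bdry2_single hconn x y z)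
  have htri : fillNorm G R (walkChain G (triangleLoop hconn x y z)) ≤ C := by
    refine (fillNorm_walkChain_le hfhif hR₀ _).trans (hC _ ?_)
    simp only [triangleLoop, SimpleGraph.Walk.length_append, geod_length]
    omega
  have hdi : fillNorm G R (walkChain G (digonLoop hconn x z)) ≤ C := by
    refine (fillNorm_walkChain_le hfhif hR₀ _).trans (hC _ ?_)
    simp only [digonLoop, SimpleGraph.Walk.length_append, geod_length]
    omega
  rw [hsplit, two_mul]
  exact (map_sub_le_add (fillSeminorm G R) _ _).trans (add_le_add htri hdi)

lemma fillSeminorm_straightenedBoundary_le (hconn : G.Connected) (hfhif : FinHomIsop G R₀ θ)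
    (hR₀ : R₀ ≤ R) {R' : ℕ} {C : ℝ} (hC : ∀ m ≤ 3 * R', θ m ≤ C) {a : C2 V}
    (ha : memC2R G R' a) :
    fillSeminorm G R (straightenedBoundary hconn hfhif hR₀ a) ≤ 2 * C * l1 a :=
  (fillSeminorm G R).le_mul_l1 _ fun t ht =>
    fillSeminorm_straightenedBoundary_single_le hconn hfhif hR₀ hC (ha t ht)

end Isoperimetry

section Duality

variable {E : Type*} [AddCommGroup E] [Module ℝ E]

lemma Seminorm.exists_dual_eq_and_abs_le (p : Seminorm ℝ E) (x : E) :
    ∃ f : Module.Dual ℝ E, f x = p x ∧ ∀ y, |f y| ≤ p y := by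
  rcases eq_or_ne x 0 with rfl | hx
  · exact ⟨0, by simp, fun y => by simp⟩
  let f₀ : E →ₗ.[ℝ] ℝ := LinearPMap.mkSpanSingleton x (p x) hx
  obtain ⟨f, hf, hfp⟩ := Module.Dual.exists_extension_of_le_seminorm_real f₀.domain f₀.toFun
    (p := p) fun ⟨y, hy⟩ => by
      obtain ⟨c, rfl⟩ := Submodule.mem_span_singleton.1 hy
      rw [LinearPMap.toFun_eq_coe, LinearPMap.mkSpanSingleton'_apply, smul_eq_mul,
        map_smul_eq_mul, Real.norm_eq_abs]
      exact mul_le_mul_of_nonneg_right (le_abs_self c) (apply_nonneg p x)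
  refine ⟨f, ?_, hfp⟩
  rw [hf ⟨x, Submodule.mem_span_singleton_self x⟩]
  exact LinearPMap.mkSpanSingleton_apply ℝ ℝ hx _

noncomputable def Seminorm.toLinfty (p : Seminorm ℝ E) (h : ℕ → Module.Dual ℝ E)
    (hh : ∀ n x, |h n x| ≤ p x) : E →ₗ[ℝ] lp (fun _ : ℕ => ℝ) ⊤ where
  toFun x := ⟨fun n => h n x, memℓp_infty ⟨p x, by rintro - ⟨n, rfl⟩; exact hh n x⟩⟩
  map_add' x y := lp.ext <| funext fun n => map_add (h n) x y
  map_smul' c x := lp.ext <| funext fun n => map_smul (h n) c x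

lemma Seminorm.norm_toLinfty_le (p : Seminorm ℝ E) (h : ℕ → Module.Dual ℝ E)
    (hh : ∀ n x, |h n x| ≤ p x) (x : E) : ‖p.toLinfty h hh x‖ ≤ p x :=
  lp.norm_le_of_forall_le (apply_nonneg p x) fun n => hh n x

end Duality

/-- `H²_{(∞)}(X; ℓ∞(ℕ, ℝ)) = 0`. -/
def VanishingH2Linfty (G : SimpleGraph V) : Prop :=
  ∀ f : C2 V →ₗ[ℝ] lp (fun _ : ℕ => ℝ) ⊤, Bdd2 G f → (∀ a : C3 V, f (bdry3 a) = 0) →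
    ∃ g : C1 V →ₗ[ℝ] lp (fun _ : ℕ => ℝ) ⊤, Bdd1 G g ∧ f = g.comp bdry2

section LinearIsoperimetry

variable {G : SimpleGraph V} {R R₀ : ℕ} {θ : ℕ → ℝ}

lemma exists_uniform_l1_bound (hconn : G.Connected) (hfhif : FinHomIsop G R₀ θ)
    (hvan : VanishingH2Linfty G) (hR₀ : R₀ ≤ R) (hR : 1 ≤ R)
    (h : ℕ → Module.Dual ℝ (B1Rsub G R)) (hh : ∀ n z, |h n z| ≤ fillSeminorm G R z) :
    ∃ M : ℝ, ∀ n z, h n z ≤ M * l1 (z : C1 V) := by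
  set T := straightenedBoundary hconn hfhif hR₀
  set F := (fillSeminorm G R).toLinfty h hh ∘ₗ T
  have hF : Bdd2 G F := fun R' => by
    obtain ⟨C, hC⟩ := ((Set.finite_Iic (3 * R')).image θ).bddAbove
    exact ⟨2 * C, fun a ha => ((fillSeminorm G R).norm_toLinfty_le h hh (T a)).trans
      (fillSeminorm_straightenedBoundary_le hconn hfhif hR₀
        (fun m hm => hC (Set.mem_image_of_mem θ hm)) ha)⟩
  have hF_cocycle (a : C3 V) : F (bdry3 a) = 0 := by
    simp [F, T, straightenedBoundary_bdry3]
  obtain ⟨g, hg, hFg⟩ := hvan F hF hF_cocycle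
  obtain ⟨M, hM⟩ := hg R
  refine ⟨M + (R + 1), fun n z => ?_⟩
  obtain ⟨a, -, hab⟩ := z.2
  have hzC : memC1R G R (z : C1 V) := B1Rsub_le_C1Rsub z.2
  -- Split `z = (z - T a) + T a` with `T a = straighten z`: the first part has a cone filling,
  -- and `h n (T a)` is the `n`-th coordinate of `F a = g z`.
  have hTa : ((T a : B1Rsub G R) : C1 V) = straighten hconn z := by
    simp [T, straightenedBoundary, hab]
  have hfar : h n (z - T a) ≤ (R + 1) * l1 (z : C1 V) := by
    refine (le_abs_self _).trans ((hh n _).trans ?_)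
    rw [fillSeminorm_apply, Submodule.coe_sub, hTa]
    exact fillNorm_sub_straighten_le hconn hR hzC
  have hnear : h n (T a) ≤ M * l1 (z : C1 V) := by
    have hFa : (g z : ℕ → ℝ) n = h n (T a) := by
      rw [← hab, ← LinearMap.comp_apply, ← hFg]
      rfl
    rw [← hFa]
    exact (le_abs_self _).trans ((lp.norm_apply_le_norm ENNReal.top_ne_zero _ n).trans (hM _ hzC))
  linarith [map_sub (h n) z (T a)]

lemma exists_fillNorm_le_mul_l1 (hconn : G.Connected) (hfhif : FinHomIsop G R₀ θ)
    (hvan : VanishingH2Linfty G) (hR₀ : R₀ ≤ R) (hR : 1 ≤ R) :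
    ∃ K : ℝ, 0 ≤ K ∧ ∀ b : C1 V, memB1R G R b → fillNorm G R b ≤ K * l1 b := by
  by_contra! hK
  choose b hb hbK using fun n : ℕ => hK n n.cast_nonneg
  choose h hhb hh using fun n => (fillSeminorm G R).exists_dual_eq_and_abs_le ⟨b n, hb n⟩
  obtain ⟨M, hM⟩ := exists_uniform_l1_bound hconn hfhif hvan hR₀ hR h hh
  obtain ⟨n, hn⟩ := exists_nat_gt M
  have hbM : fillNorm G R (b n) ≤ M * l1 (b n) := (hhb n).symm.trans_le (hM n ⟨b n, hb n⟩)
  nlinarith [hbK n, l1_nonneg (b n)]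

end LinearIsoperimetry

lemma exists_extension_of_fillNorm_le {G : SimpleGraph V} {R : ℕ} {K : ℝ} (hK₀ : 0 ≤ K)
    (hK : ∀ b : C1 V, memB1R G R b → fillNorm G R b ≤ K * l1 b) (g : B1Rsub G R →ₗ[ℝ] ℝ)
    {Mg : ℝ} (hMg : 0 ≤ Mg) (hg : ∀ b : B1Rsub G R, ‖g b‖ ≤ Mg * fillNorm G R (b : C1 V)) :
    ∃ Gl : C1Rsub G R →ₗ[ℝ] ℝ,
      (∀ (b : B1Rsub G R) (hb : (b : C1 V) ∈ C1Rsub G R), Gl ⟨b, hb⟩ = g b) ∧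
      ∀ c : C1Rsub G R, ‖Gl c‖ ≤ K * Mg * l1 (c : C1 V) := by
  set S := (B1Rsub G R).comap (C1Rsub G R).subtype
  set p : Seminorm ℝ (C1Rsub G R) :=
    (K * Mg).toNNReal • (l1Seminorm (α := V × V)).comp (C1Rsub G R).subtype
  have hp (c : C1Rsub G R) : p c = K * Mg * l1 (c : C1 V) := by
    simp [p, NNReal.smul_def, Real.coe_toNNReal _ (mul_nonneg hK₀ hMg)]
  let incl : S →ₗ[ℝ] B1Rsub G R :=
    LinearMap.codRestrict _ ((C1Rsub G R).subtype ∘ₗ S.subtype) fun z => z.2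
  obtain ⟨Gl, hGl, hGlp⟩ := Module.Dual.exists_extension_of_le_seminorm_real S (g ∘ₗ incl)
    (p := p) fun z => by
      rw [hp]
      calc g (incl z) ≤ Mg * fillNorm G R (z : C1 V) := (le_abs_self _).trans (hg (incl z))
        _ ≤ Mg * (K * l1 (z : C1 V)) := mul_le_mul_of_nonneg_left (hK _ z.2) hMg
        _ = K * Mg * l1 (z : C1 V) := by ring
  exact ⟨Gl, fun b hb => hGl ⟨⟨b, hb⟩, b.2⟩, fun c => (hGlp c).trans_eq (hp c)⟩

/-- if X has a finite homological isoperimetric function and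
H²_{(∞)}(X;ℓ∞(ℕ,ℝ)) = 0, then for all large R there is K ≥ 0 such that every
functional on B₁^R bounded w.r.t. the filling norm extends to a functional on
C₁^R bounded w.r.t. ℓ¹, with operator norm ≤ K times the filling-norm bound. -/
theorem uniform_extension (G : SimpleGraph V) (hconn : G.Connected)
    (R₀ : ℕ) (θ : ℕ → ℝ) (hfhif : FinHomIsop G R₀ θ)
    (hvan : ∀ f : C2 V →ₗ[ℝ] lp (fun _ : ℕ => ℝ) ⊤,
      Bdd2 G f → (∀ a : C3 V, f (bdry3 a) = 0) →
      ∃ g : C1 V →ₗ[ℝ] lp (fun _ : ℕ => ℝ) ⊤, Bdd1 G g ∧ f = g.comp bdry2) :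
    ∃ R₁ : ℕ, ∀ R, R₁ ≤ R → ∃ K : ℝ, 0 ≤ K ∧
      ∀ (g : B1Rsub G R →ₗ[ℝ] ℝ) (Mg : ℝ), 0 ≤ Mg →
        (∀ b : B1Rsub G R, ‖g b‖ ≤ Mg * fillNorm G R (b : C1 V)) →
        ∃ Gl : C1Rsub G R →ₗ[ℝ] ℝ,
          (∀ (b : B1Rsub G R) (hb : (b : C1 V) ∈ C1Rsub G R), Gl ⟨b, hb⟩ = g b) ∧
          ∀ c : C1Rsub G R, ‖Gl c‖ ≤ K * Mg * l1 (c : C1 V) := by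
  refine ⟨max R₀ 1, fun R hR => ?_⟩
  obtain ⟨K, hK₀, hK⟩ := exists_fillNorm_le_mul_l1 hconn hfhif hvan
    (le_of_max_le_left hR) (le_of_max_le_right hR)
  exact ⟨K, hK₀, fun g Mg hMg hg => exists_extension_of_fillNorm_le hK₀ hK g hMg hg⟩
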